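/- Let X₁, X₂ be Banach spaces, V₁ ⊆ X₁, V₂ ⊆ X₂ nonempty closed convex sets, X = X₁ ⊕_∞ X₂ and V = V₁ × V₂. If for each i ∈ {1,2} the triplet (X_i, V_i, CB(X_i)) has property-(P₁), then (X, V, CB(X)) has property-(P₁). -/

import Mathlib

open Metric Set Bornology Pointwise

/-- The farthest distance `r(v,B) = sup_{b ∈ B} ‖v - b‖`. -/
noncomputable def farr {X : Type*} [NormedAddCommGroup X] (v : X) (B : Set X) : ℝ :=
  ⨆ b : B, ‖v - (b : X)‖

/-- The restricted Chebyshev radius `rad_V(B) = inf_{v ∈ V} r(v,B)`. -/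
noncomputable def rad {X : Type*} [NormedAddCommGroup X] (V B : Set X) : ℝ :=
  ⨅ v : V, farr (v : X) B

/-- The set of restricted Chebyshev centers of `B` in `V`. -/
noncomputable def cheb {X : Type*} [NormedAddCommGroup X] (V B : Set X) : Set X :=
  {v ∈ V | farr v B = rad V B}

/-- Property-(P₁) for the triplet `(X, V, CB(X))`: restricted Chebyshev centers exist for
every nonempty closed bounded set and near-centers are close to centers. -/
noncomputable def propP1 {X : Type*} [NormedAddCommGroup X] (V : Set X) : Prop :=
  ∀ B : Set X, B.Nonempty → IsClosed B → IsBounded B →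
    (cheb V B).Nonempty ∧ ∀ ε > (0 : ℝ), ∃ δ > (0 : ℝ),
      {v ∈ V | farr v B ≤ rad V B + δ} ⊆ cheb V B + closedBall 0 ε

/-!
In the max norm, `r((v₁, v₂), B) = max (r(v₁, B₁)) (r(v₂, B₂))`, where `Bᵢ` is the closure of
the `i`-th coordinate projection of `B`. Hence `rad_V(B) = R := max (rad_{V₁}(B₁)) (rad_{V₂}(B₂))`,
centers of `B` are pairs of points of the `R`-sublevel sets, and a `δ`-near center is a pair of
points of the `(R + δ)`-sublevel sets. So it suffices that in each factor the `(R + δ)`-sublevel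
set lies `ε`-close to the `R`-sublevel set for small `δ`. For `R = rad_{Vᵢ}(Bᵢ)` this is
property-(P₁); for `R > rad_{Vᵢ}(Bᵢ)` a point is pulled slightly towards a center, using
convexity of `Vᵢ`.
-/

section Farthest

variable {X : Type*} [NormedAddCommGroup X] {v : X} {B : Set X}

lemma farr_nonneg (v : X) (B : Set X) : 0 ≤ farr v B :=
  Real.iSup_nonneg fun _ => norm_nonneg _

lemma norm_sub_le_farr (hB : IsBounded B) {b : X} (hb : b ∈ B) : ‖v - b‖ ≤ farr v B := by
  refine le_ciSup (f := fun b : B => ‖v - (b : X)‖) ?_ ⟨b, hb⟩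
  obtain ⟨r, hr⟩ := hB.subset_closedBall v
  refine ⟨r, ?_⟩
  rintro _ ⟨b, rfl⟩
  simpa [dist_eq_norm'] using hr b.2

lemma farr_le (hB : B.Nonempty) {r : ℝ} (h : ∀ b ∈ B, ‖v - b‖ ≤ r) : farr v B ≤ r :=
  have := hB.to_subtype
  ciSup_le fun b => h b b.2

lemma farr_closure (v : X) (hne : B.Nonempty) (hB : IsBounded B) :
    farr v (closure B) = farr v B := by
  refine le_antisymm (farr_le hne.closure fun b hb => ?_)
    (farr_le hne fun b hb => norm_sub_le_farr hB.closure (subset_closure hb))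
  have hcl : IsClosed {x : X | ‖v - x‖ ≤ farr v B} :=
    isClosed_le (by fun_prop) continuous_const
  exact hcl.closure_subset_iff.mpr (fun b hb => norm_sub_le_farr hB hb) hb

lemma convexOn_farr [NormedSpace ℝ X] (hne : B.Nonempty) (hB : IsBounded B) :
    ConvexOn ℝ univ fun v => farr v B := by
  refine ⟨convex_univ, fun w _ v _ a b ha hb hab => farr_le hne fun x hx => ?_⟩
  have hsplit : a • w + b • v - x = a • (w - x) + b • (v - x) := by
    rw [smul_sub, smul_sub, sub_add_sub_comm, ← add_smul, hab, one_smul]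
  calc ‖a • w + b • v - x‖ ≤ a * ‖w - x‖ + b * ‖v - x‖ := by
        rw [hsplit]
        exact convexOn_univ_norm.2 trivial trivial ha hb hab
    _ ≤ a • farr w B + b • farr v B := by
        simp only [smul_eq_mul]
        gcongr <;> exact norm_sub_le_farr hB hx

lemma rad_le_farr {V : Set X} (hv : v ∈ V) : rad V B ≤ farr v B :=
  ciInf_le (f := fun u : V => farr (u : X) B) ⟨0, by rintro _ ⟨u, rfl⟩; exact farr_nonneg _ _⟩
    ⟨v, hv⟩

lemma le_rad {V : Set X} (hV : V.Nonempty) {r : ℝ} (h : ∀ v ∈ V, r ≤ farr v B) :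
    r ≤ rad V B :=
  have := hV.to_subtype
  le_ciInf fun u => h u u.2

end Farthest

/-- The sublevel set `{v ∈ V | r(v, B) ≤ R}`; at level `rad_V(B) + δ` it is `cent_V(B, δ)`. -/
def farrSublevel {X : Type*} [NormedAddCommGroup X] (V B : Set X) (R : ℝ) : Set X :=
  {v ∈ V | farr v B ≤ R}

section Sublevel

variable {X : Type*} [NormedAddCommGroup X] {V B : Set X}

lemma farrSublevel_mono {R S : ℝ} (h : R ≤ S) : farrSublevel V B R ⊆ farrSublevel V B S :=
  fun _ hv => ⟨hv.1, hv.2.trans h⟩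

lemma cheb_eq_farrSublevel_rad : cheb V B = farrSublevel V B (rad V B) := by
  ext v
  exact and_congr_right fun hv => ⟨le_of_eq, fun h => h.antisymm (rad_le_farr hv)⟩

/-- Moving `v` towards `w` by the fraction `t = δ / (R - r(w, B))` brings it into the
`R`-sublevel set, by convexity of `r(·, B)`, and moves it by only `t ‖v - w‖`. -/
lemma exists_farrSublevel_add_subset_of_farr_lt [NormedSpace ℝ X] (hV : Convex ℝ V)
    (hne : B.Nonempty) (hB : IsBounded B) {w : X} (hw : w ∈ V) {R : ℝ} (hwR : farr w B < R)
    {ε : ℝ} (hε : 0 < ε) :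
    ∃ δ > 0, farrSublevel V B (R + δ) ⊆ farrSublevel V B R + closedBall 0 ε := by
  set c := R - farr w B with hc
  have hc₀ : 0 < c := sub_pos.2 hwR
  have hR₀ : 0 ≤ R := (farr_nonneg w B).trans hwR.le
  set δ := min c (ε * c / (2 * R + c))
  have hδ₀ : 0 < δ := lt_min hc₀ (by positivity)
  have hδc : δ ≤ c := min_le_left _ _
  have hδε : δ * (2 * R + c) ≤ ε * c :=
    (le_div_iff₀ (by positivity)).1 (min_le_right _ _)
  refine ⟨δ, hδ₀, fun v ⟨hv, hvR⟩ => ?_⟩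
  set t := δ / c
  have ht₀ : 0 ≤ t := by positivity
  have ht₁ : t ≤ 1 := (div_le_one hc₀).2 hδc
  have htc : t * c = δ := div_mul_cancel₀ δ hc₀.ne'
  refine ⟨t • w + (1 - t) • v, ⟨hV hw hv ht₀ (by linarith) (by ring), ?_⟩,
    v - (t • w + (1 - t) • v), ?_, add_sub_cancel _ _⟩
  · calc farr (t • w + (1 - t) • v) B ≤ t * farr w B + (1 - t) * farr v B :=
          (convexOn_farr hne hB).2 trivial trivial ht₀ (by linarith) (by ring)
      _ ≤ t * (R - c) + (1 - t) * (R + δ) := by gcongr; linarith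
      _ = R - t * δ := by rw [← htc]; ring
      _ ≤ R := sub_le_self R (by positivity)
  · obtain ⟨b, hb⟩ := hne
    have hvb : ‖v - b‖ ≤ R + δ := (norm_sub_le_farr hB hb).trans hvR
    have hbw : ‖b - w‖ ≤ R - c := norm_sub_rev b w ▸ (norm_sub_le_farr hB hb).trans (by simp [hc])
    have hvw : ‖v - w‖ ≤ 2 * R + c := by
      linarith [norm_sub_le_norm_sub_add_norm_sub v b w]
    have hdiff : v - (t • w + (1 - t) • v) = t • (v - w) := by
      simp only [smul_sub, sub_smul, one_smul]; abel
    rw [mem_closedBall_zero_iff, hdiff, norm_smul, Real.norm_of_nonneg ht₀]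
    calc t * ‖v - w‖ ≤ t * (2 * R + c) := by gcongr
      _ ≤ ε := by
        rw [div_mul_eq_mul_div, div_le_iff₀ hc₀]
        linarith

end Sublevel

lemma exists_farrSublevel_add_subset_of_rad_le {X : Type*} [NormedAddCommGroup X]
    [NormedSpace ℝ X] {V B : Set X} (hP : propP1 V) (hV : Convex ℝ V) (hne : B.Nonempty)
    (hcl : IsClosed B) (hB : IsBounded B) {R : ℝ} (hR : rad V B ≤ R) {ε : ℝ} (hε : 0 < ε) :
    ∃ δ > 0, farrSublevel V B (R + δ) ⊆ farrSublevel V B R + closedBall 0 ε := by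
  obtain ⟨⟨w, hwV, hw⟩, hcont⟩ := hP B hne hcl hB
  rcases hR.eq_or_lt with rfl | hlt
  · rw [← cheb_eq_farrSublevel_rad]
    exact hcont ε hε
  · exact exists_farrSublevel_add_subset_of_farr_lt hV hne hB hwV (hw ▸ hlt) hε

section Prod

variable {X₁ X₂ : Type*} [NormedAddCommGroup X₁] [NormedAddCommGroup X₂] {V₁ : Set X₁}
  {V₂ : Set X₂} {B : Set (X₁ × X₂)}

lemma farr_prod (v : X₁ × X₂) (hne : B.Nonempty) (hB : IsBounded B) :
    farr v B = max (farr v.1 (closure (Prod.fst '' B))) (farr v.2 (closure (Prod.snd '' B))) := by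
  rw [farr_closure _ (hne.image _) hB.image_fst, farr_closure _ (hne.image _) hB.image_snd]
  refine le_antisymm (farr_le hne fun b hb => ?_)
    (max_le (farr_le (hne.image _) ?_) (farr_le (hne.image _) ?_))
  · rw [Prod.norm_def]
    exact max_le_max (norm_sub_le_farr hB.image_fst (mem_image_of_mem _ hb))
      (norm_sub_le_farr hB.image_snd (mem_image_of_mem _ hb))
  · rintro _ ⟨b, hb, rfl⟩
    exact (norm_fst_le (v - b)).trans (norm_sub_le_farr hB hb)
  · rintro _ ⟨b, hb, rfl⟩
    exact (norm_snd_le (v - b)).trans (norm_sub_le_farr hB hb)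

lemma farrSublevel_prod (hne : B.Nonempty) (hB : IsBounded B) (R : ℝ) :
    farrSublevel (V₁ ×ˢ V₂) B R = farrSublevel V₁ (closure (Prod.fst '' B)) R ×ˢ
      farrSublevel V₂ (closure (Prod.snd '' B)) R := by
  ext v
  simp only [farrSublevel, mem_prod, mem_ofPred_eq, farr_prod v hne hB, max_le_iff]
  tauto

lemma rad_prod (hne : B.Nonempty) (hB : IsBounded B)
    (h₁ : (cheb V₁ (closure (Prod.fst '' B))).Nonempty)
    (h₂ : (cheb V₂ (closure (Prod.snd '' B))).Nonempty) :
    rad (V₁ ×ˢ V₂) B =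
      max (rad V₁ (closure (Prod.fst '' B))) (rad V₂ (closure (Prod.snd '' B))) := by
  obtain ⟨⟨w₁, hw₁V, hw₁⟩, ⟨w₂, hw₂V, hw₂⟩⟩ := And.intro h₁ h₂
  refine le_antisymm ?_ (le_rad ⟨(w₁, w₂), mk_mem_prod hw₁V hw₂V⟩ fun v hv => ?_)
  · calc rad (V₁ ×ˢ V₂) B ≤ farr (w₁, w₂) B := rad_le_farr ⟨hw₁V, hw₂V⟩
      _ = _ := by rw [farr_prod _ hne hB, hw₁, hw₂]
  · rw [farr_prod v hne hB]
    exact max_le_max (rad_le_farr hv.1) (rad_le_farr hv.2)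

end Prod

theorem stmt7_general {X₁ X₂ : Type*} [NormedAddCommGroup X₁] [NormedSpace ℝ X₁]
    [NormedAddCommGroup X₂] [NormedSpace ℝ X₂]
    (V₁ : Set X₁) (V₂ : Set X₂)
    (hV₁conv : Convex ℝ V₁)
    (hV₂conv : Convex ℝ V₂)
    (h₁ : propP1 V₁) (h₂ : propP1 V₂) :
    propP1 (V₁ ×ˢ V₂) := by
  intro B hne _ hB
  set B₁ := closure (Prod.fst '' B)
  set B₂ := closure (Prod.snd '' B)
  have hne₁ : B₁.Nonempty := (hne.image _).closure
  have hne₂ : B₂.Nonempty := (hne.image _).closure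
  obtain ⟨hc₁, -⟩ := h₁ B₁ hne₁ isClosed_closure hB.image_fst.closure
  obtain ⟨hc₂, -⟩ := h₂ B₂ hne₂ isClosed_closure hB.image_snd.closure
  set R := max (rad V₁ B₁) (rad V₂ B₂)
  have hprod := farrSublevel_prod (V₁ := V₁) (V₂ := V₂) hne hB
  have hrad := rad_prod hne hB hc₁ hc₂
  simp only [cheb_eq_farrSublevel_rad, hrad] at hc₁ hc₂ ⊢
  refine ⟨?_, fun ε hε => ?_⟩
  · rw [hprod]
    exact (hc₁.prod hc₂).mono
      (prod_mono (farrSublevel_mono (le_max_left _ _)) (farrSublevel_mono (le_max_right _ _)))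
  obtain ⟨δ₁, hδ₁, hsub₁⟩ := exists_farrSublevel_add_subset_of_rad_le h₁ hV₁conv hne₁
    isClosed_closure hB.image_fst.closure (le_max_left _ _) hε
  obtain ⟨δ₂, hδ₂, hsub₂⟩ := exists_farrSublevel_add_subset_of_rad_le h₂ hV₂conv hne₂
    isClosed_closure hB.image_snd.closure (le_max_right _ _) hε
  refine ⟨min δ₁ δ₂, lt_min hδ₁ hδ₂, ?_⟩
  calc farrSublevel (V₁ ×ˢ V₂) B (R + min δ₁ δ₂)
      ⊆ (farrSublevel V₁ B₁ R + closedBall 0 ε) ×ˢ (farrSublevel V₂ B₂ R + closedBall 0 ε) := by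
        rw [hprod]
        exact prod_mono ((farrSublevel_mono (by gcongr; apply min_le_left)).trans hsub₁)
          ((farrSublevel_mono (by gcongr; apply min_le_right)).trans hsub₂)
    _ = farrSublevel (V₁ ×ˢ V₂) B R + closedBall 0 ε := by
        rw [← prod_add_prod_comm, closedBall_prod_same, hprod]
        rfl

theorem stmt7 {X₁ X₂ : Type*} [NormedAddCommGroup X₁] [NormedSpace ℝ X₁] [CompleteSpace X₁]
    [NormedAddCommGroup X₂] [NormedSpace ℝ X₂] [CompleteSpace X₂]
    (V₁ : Set X₁) (V₂ : Set X₂)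
    (hV₁ne : V₁.Nonempty) (hV₁c : IsClosed V₁) (hV₁conv : Convex ℝ V₁)
    (hV₂ne : V₂.Nonempty) (hV₂c : IsClosed V₂) (hV₂conv : Convex ℝ V₂)
    (h₁ : propP1 V₁) (h₂ : propP1 V₂) :
    propP1 (V₁ ×ˢ V₂) :=
  stmt7_general V₁ V₂ hV₁conv hV₂conv h₁ h₂
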